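/- arXiv:2511.23167 — 2 statements merged into one kernel-verified Lean document; each statement's English description precedes it below -/
import Mathlib

section
/- Let ι be a finite index set. For each i ∈ ι let u_i > 0, d_i > 0, a_i ∈ ℝ, b_i ∈ ℝ be given, and let S > 0, t₃ > 0, t₄ > 0, T ∈ ℝ, t₁, t₂ ∈ ℝ with t₁ > a_i and t₂ > b_i for all i. Then there exists τ : ι → ℝ with τ_i > 0 for all i, ∑_{i ∈ ι} τ_i ≤ T, and for all i: u_i/τ_i ≤ S, a_i + u_i/τ_i ≤ t₁, b_i + d_i/τ_i ≤ t₂, u_i/τ_i ≤ t₃, and d_i/τ_i ≤ t₄, if and only if ∑_{i ∈ ι} max{ u_i/S, u_i/(t₁ − a_i), d_i/(t₂ − b_i), u_i/t₃, d_i/t₄ } ≤ T. Moreover, when the condition holds, τ_i = max{ u_i/S, u_i/(t₁ − a_i), d_i/(t₂ − b_i), u_i/t₃, d_i/t₄ } is such a feasible allocation. -/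
lemma div_swap_le {u c x : ℝ} (hc : 0 < c) (hx : 0 < x) :
    u / x ≤ c ↔ u / c ≤ x := by
  rw [div_le_iff₀ hx, div_le_iff₀ hc, mul_comm]

/-- Elimination of the time-slot variables τ (P4 → P5).
With per-user constants `u i, d i > 0`, `a i, b i ∈ ℝ`, bounds `S, t₃, t₄ > 0`,
`T ∈ ℝ`, and `t₁ > a i`, `t₂ > b i` for all `i`, a feasible slot allocation
`τ` exists iff `∑ i, g i ≤ T` where
`g i = max { u i / S, u i / (t₁ − a i), d i / (t₂ − b i), u i / t₃, d i / t₄ }`;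
moreover `τ = g` is then feasible. -/
theorem stmt_7 {ι : Type*} [Fintype ι]
    (u d : ι → ℝ) (a b : ι → ℝ) (S t₁ t₂ t₃ t₄ T : ℝ)
    (hu : ∀ i, 0 < u i) (hd : ∀ i, 0 < d i) (hS : 0 < S)
    (ht₃ : 0 < t₃) (ht₄ : 0 < t₄)
    (ht₁ : ∀ i, a i < t₁) (ht₂ : ∀ i, b i < t₂)
    (g : ι → ℝ)
    (hg : ∀ i, g i = max (u i / S) (max (u i / (t₁ - a i))
        (max (d i / (t₂ - b i)) (max (u i / t₃) (d i / t₄))))) :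
    ((∃ τ : ι → ℝ, (∀ i, 0 < τ i) ∧ (∑ i, τ i) ≤ T ∧
        ∀ i, u i / τ i ≤ S ∧ a i + u i / τ i ≤ t₁ ∧ b i + d i / τ i ≤ t₂ ∧
          u i / τ i ≤ t₃ ∧ d i / τ i ≤ t₄)
      ↔ (∑ i, g i) ≤ T) ∧
    ((∑ i, g i) ≤ T →
      (∀ i, 0 < g i) ∧ (∑ i, g i) ≤ T ∧
        ∀ i, u i / g i ≤ S ∧ a i + u i / g i ≤ t₁ ∧ b i + d i / g i ≤ t₂ ∧
          u i / g i ≤ t₃ ∧ d i / g i ≤ t₄) := by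
  have hsub1 : ∀ i, 0 < t₁ - a i := fun i => sub_pos.mpr (ht₁ i)
  have hsub2 : ∀ i, 0 < t₂ - b i := fun i => sub_pos.mpr (ht₂ i)
  have hgpos : ∀ i, 0 < g i := by
    intro i; rw [hg i]
    exact lt_of_lt_of_le (div_pos (hu i) hS) (le_max_left _ _)
  have hgle : ∀ i, u i / g i ≤ S ∧ a i + u i / g i ≤ t₁ ∧ b i + d i / g i ≤ t₂ ∧
      u i / g i ≤ t₃ ∧ d i / g i ≤ t₄ := by
    intro i
    have h1 : u i / S ≤ g i := by rw [hg i]; exact le_max_left _ _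
    have h2 : u i / (t₁ - a i) ≤ g i := by
      rw [hg i]; exact le_trans (le_max_left _ _) (le_max_right _ _)
    have h3 : d i / (t₂ - b i) ≤ g i := by
      rw [hg i]
      exact le_trans (le_trans (le_max_left _ _) (le_max_right _ _)) (le_max_right _ _)
    have h4 : u i / t₃ ≤ g i := by
      rw [hg i]
      exact le_trans (le_trans (le_trans (le_max_left _ _) (le_max_right _ _))
        (le_max_right _ _)) (le_max_right _ _)
    have h5 : d i / t₄ ≤ g i := by
      rw [hg i]
      exact le_trans (le_trans (le_trans (le_max_right _ _) (le_max_right _ _))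
        (le_max_right _ _)) (le_max_right _ _)
    refine ⟨(div_swap_le hS (hgpos i)).mpr h1, ?_,
      ?_, (div_swap_le ht₃ (hgpos i)).mpr h4, (div_swap_le ht₄ (hgpos i)).mpr h5⟩
    · have := (div_swap_le (hsub1 i) (hgpos i)).mpr h2; linarith
    · have := (div_swap_le (hsub2 i) (hgpos i)).mpr h3; linarith
  constructor
  · constructor
    · rintro ⟨τ, hτ, hsum, hfeas⟩
      have : ∀ i, g i ≤ τ i := by
        intro i
        obtain ⟨c1, c2, c3, c4, c5⟩ := hfeas i
        rw [hg i]
        have e1 : u i / S ≤ τ i := (div_swap_le hS (hτ i)).mp c1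
        have e2 : u i / (t₁ - a i) ≤ τ i :=
          (div_swap_le (hsub1 i) (hτ i)).mp (by linarith)
        have e3 : d i / (t₂ - b i) ≤ τ i :=
          (div_swap_le (hsub2 i) (hτ i)).mp (by linarith)
        have e4 : u i / t₃ ≤ τ i := (div_swap_le ht₃ (hτ i)).mp c4
        have e5 : d i / t₄ ≤ τ i := (div_swap_le ht₄ (hτ i)).mp c5
        simp [e1, e2, e3, e4, e5]
      exact le_trans (Finset.sum_le_sum fun i _ => this i) hsum
    · intro hT
      exact ⟨g, hgpos, hT, hgle⟩
  · intro hT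
    exact ⟨hgpos, hT, hgle⟩
end

section
/- Let ι be a finite index set, and for each i ∈ ι let u_i > 0, d_i > 0, S > 0, a_i, b_i ∈ ℝ be given constants, and let T, K ∈ ℝ. Define g_i(t₁,t₂,t₃,t₄) = max{ u_i/S, u_i/(t₁ − a_i), d_i/(t₂ − b_i), u_i/t₃, d_i/t₄ }. Then the set { (t₁, t₂, t₃, t₄) ∈ ℝ⁴ : (∀ i, t₁ > a_i), (∀ i, t₂ > b_i), t₃ > 0, t₄ > 0, ∑_{i ∈ ι} g_i(t₁,t₂,t₃,t₄) ≤ T, t₃ + t₄ ≤ K } is a convex subset of ℝ⁴. -/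
lemma comb_lt (c x y α β : ℝ) (hx : c < x) (hy : c < y)
    (hα : 0 ≤ α) (hβ : 0 ≤ β) (hab : α + β = 1) : c < α * x + β * y := by
  rcases hα.eq_or_lt with h | h
  · have hβ1 : β = 1 := by linarith
    rw [← h, hβ1]
    simpa using hy
  · have h1 : α * c < α * x := (mul_lt_mul_iff_right₀ h).2 hx
    have h2 : β * c ≤ β * y := mul_le_mul_of_nonneg_left hy.le hβ
    have h3 : α * c + β * c = c := by linear_combination c * hab
    linarith

lemma div_comb (c x y α β : ℝ) (hc : 0 < c) (hx : 0 < x) (hy : 0 < y)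
    (hα : 0 ≤ α) (hβ : 0 ≤ β) (hab : α + β = 1) :
    c / (α * x + β * y) ≤ α * (c / x) + β * (c / y) := by
  have hz : 0 < α * x + β * y := comb_lt 0 x y α β hx hy hα hβ hab
  have h1 : α * (c / x) + β * (c / y) = (α * c * y + β * c * x) / (x * y) := by
    field_simp
  rw [h1, div_le_div_iff₀ hz (mul_pos hx hy)]
  have hβ' : β = 1 - α := by linarith
  subst hβ'
  nlinarith [mul_nonneg (mul_nonneg (mul_nonneg hα hβ) hc.le) (sq_nonneg (x - y))]

/-- The feasible region of problem P5 is convex: with per-user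
constants `u i, d i > 0`, `S > 0`, `a i, b i ∈ ℝ` and bounds `T, K ∈ ℝ`, and
`g i (t₁,t₂,t₃,t₄) = max { u i/S, u i/(t₁−a i), d i/(t₂−b i), u i/t₃, d i/t₄ }`,
the set `{ (t₁,t₂,t₃,t₄) : ∀ i, t₁ > a i, ∀ i, t₂ > b i, t₃ > 0, t₄ > 0,
∑ i g i ≤ T, t₃ + t₄ ≤ K }` is convex in ℝ⁴. -/
theorem stmt_9 {ι : Type*} [Fintype ι]
    (u d a b : ι → ℝ) (S T K : ℝ)
    (hu : ∀ i, 0 < u i) (hd : ∀ i, 0 < d i) (hS : 0 < S)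
    (g : ι → ℝ × ℝ × ℝ × ℝ → ℝ)
    (hg : ∀ i (p : ℝ × ℝ × ℝ × ℝ),
        g i p = max (u i / S) (max (u i / (p.1 - a i))
          (max (d i / (p.2.1 - b i)) (max (u i / p.2.2.1) (d i / p.2.2.2))))) :
    Convex ℝ { p : ℝ × ℝ × ℝ × ℝ |
        (∀ i, a i < p.1) ∧ (∀ i, b i < p.2.1) ∧ 0 < p.2.2.1 ∧ 0 < p.2.2.2 ∧
        (∑ i, g i p) ≤ T ∧ p.2.2.1 + p.2.2.2 ≤ K } := by
  rintro p ⟨hp1, hp2, hp3, hp4, hp5, hp6⟩ q ⟨hq1, hq2, hq3, hq4, hq5, hq6⟩ α β hα hβ hab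
  have hr1 : (α • p + β • q).1 = α * p.1 + β * q.1 := rfl
  have hr2 : (α • p + β • q).2.1 = α * p.2.1 + β * q.2.1 := rfl
  have hr3 : (α • p + β • q).2.2.1 = α * p.2.2.1 + β * q.2.2.1 := rfl
  have hr4 : (α • p + β • q).2.2.2 = α * p.2.2.2 + β * q.2.2.2 := rfl
  refine ⟨?_, ?_, ?_, ?_, ?_, ?_⟩
  · intro i; rw [hr1]; exact comb_lt _ _ _ _ _ (hp1 i) (hq1 i) hα hβ hab
  · intro i; rw [hr2]; exact comb_lt _ _ _ _ _ (hp2 i) (hq2 i) hα hβ hab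
  · rw [hr3]; exact comb_lt _ _ _ _ _ hp3 hq3 hα hβ hab
  · rw [hr4]; exact comb_lt _ _ _ _ _ hp4 hq4 hα hβ hab
  · have key : ∀ i, g i (α • p + β • q) ≤ α * g i p + β * g i q := by
      intro i
      have gp := hg i p
      have gq := hg i q
      have hgp0 : u i / S ≤ g i p := by rw [gp]; exact le_max_left _ _
      have hgq0 : u i / S ≤ g i q := by rw [gq]; exact le_max_left _ _
      have hgp1 : u i / (p.1 - a i) ≤ g i p := by
        rw [gp]; exact le_trans (le_max_left _ _) (le_max_right _ _)
      have hgq1 : u i / (q.1 - a i) ≤ g i q := by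
        rw [gq]; exact le_trans (le_max_left _ _) (le_max_right _ _)
      have hgp2 : d i / (p.2.1 - b i) ≤ g i p := by
        rw [gp]
        exact le_trans (le_trans (le_max_left _ _) (le_max_right _ _)) (le_max_right _ _)
      have hgq2 : d i / (q.2.1 - b i) ≤ g i q := by
        rw [gq]
        exact le_trans (le_trans (le_max_left _ _) (le_max_right _ _)) (le_max_right _ _)
      have hgp3 : u i / p.2.2.1 ≤ g i p := by
        rw [gp]
        exact le_trans (le_trans (le_trans (le_max_left _ _) (le_max_right _ _))
          (le_max_right _ _)) (le_max_right _ _)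
      have hgq3 : u i / q.2.2.1 ≤ g i q := by
        rw [gq]
        exact le_trans (le_trans (le_trans (le_max_left _ _) (le_max_right _ _))
          (le_max_right _ _)) (le_max_right _ _)
      have hgp4 : d i / p.2.2.2 ≤ g i p := by
        rw [gp]
        exact le_trans (le_trans (le_trans (le_max_right _ _) (le_max_right _ _))
          (le_max_right _ _)) (le_max_right _ _)
      have hgq4 : d i / q.2.2.2 ≤ g i q := by
        rw [gq]
        exact le_trans (le_trans (le_trans (le_max_right _ _) (le_max_right _ _))
          (le_max_right _ _)) (le_max_right _ _)
      rw [hg i, hr1, hr2, hr3, hr4]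
      have comb : ∀ cp cq : ℝ, cp ≤ g i p → cq ≤ g i q →
          α * cp + β * cq ≤ α * g i p + β * g i q := fun cp cq h1 h2 => by
        have := mul_le_mul_of_nonneg_left h1 hα
        have := mul_le_mul_of_nonneg_left h2 hβ
        linarith
      refine max_le ?_ (max_le ?_ (max_le ?_ (max_le ?_ ?_)))
      · have heq : u i / S = α * (u i / S) + β * (u i / S) := by
          rw [← add_mul, hab, one_mul]
        rw [heq]; exact comb _ _ hgp0 hgq0
      · have h1 := hp1 i; have h2 := hq1 i
        have key := div_comb (u i) (p.1 - a i) (q.1 - a i) α β (hu i)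
          (by linarith) (by linarith) hα hβ hab
        have hden : α * p.1 + β * q.1 - a i = α * (p.1 - a i) + β * (q.1 - a i) := by
          linear_combination (a i) * hab
        rw [hden]
        exact le_trans key (comb _ _ hgp1 hgq1)
      · have h1 := hp2 i; have h2 := hq2 i
        have key := div_comb (d i) (p.2.1 - b i) (q.2.1 - b i) α β (hd i)
          (by linarith) (by linarith) hα hβ hab
        have hden : α * p.2.1 + β * q.2.1 - b i = α * (p.2.1 - b i) + β * (q.2.1 - b i) := by
          linear_combination (b i) * hab
        rw [hden]
        exact le_trans key (comb _ _ hgp2 hgq2)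
      · exact le_trans (div_comb (u i) p.2.2.1 q.2.2.1 α β (hu i) hp3 hq3 hα hβ hab)
          (comb _ _ hgp3 hgq3)
      · exact le_trans (div_comb (d i) p.2.2.2 q.2.2.2 α β (hd i) hp4 hq4 hα hβ hab)
          (comb _ _ hgp4 hgq4)
    calc ∑ i, g i (α • p + β • q) ≤ ∑ i, (α * g i p + β * g i q) :=
          Finset.sum_le_sum fun i _ => key i
      _ = α * ∑ i, g i p + β * ∑ i, g i q := by
          rw [Finset.sum_add_distrib, Finset.mul_sum, Finset.mul_sum]
      _ ≤ α * T + β * T := by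
          have := mul_le_mul_of_nonneg_left hp5 hα
          have := mul_le_mul_of_nonneg_left hq5 hβ
          linarith
      _ = T := by linear_combination T * hab
  · rw [hr3, hr4]
    have h1 := mul_le_mul_of_nonneg_left hp6 hα
    have h2 := mul_le_mul_of_nonneg_left hq6 hβ
    have hK : α * K + β * K = K := by linear_combination K * hab
    linarith
end
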